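/- arXiv:0802.3271 — 4 statements merged into one kernel-verified Lean document; each statement's English description precedes it below -/
import Mathlib

section
/- In a symmetric composition algebra S with norm q and polar form b, for any x, y ∈ S the triple t_{x,y} = (σ_{x,y}, ½b(x,y)id − r_x l_y, ½b(x,y)id − l_x r_y) belongs to the triality Lie algebra tri(S), i.e., each component lies in so(S,b) and the first component satisfies d₀(u • v) = d₁(u) • v + u • d₂(v) for all u, v ∈ S, where (d₀,d₁,d₂) = t_{x,y}. -/
/-- In a symmetric composition algebra `S` (product `•` written `*`,
multiplicative nondegenerate norm `q` with associative polar form `b`), for any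
`x, y ∈ S` the triple
`t_{x,y} = (σ_{x,y}, ½b(x,y)id − r_x l_y, ½b(x,y)id − l_x r_y)`
lies in the triality Lie algebra `tri(S)`: each component is skew relative to `b`
(lies in `so(S,b)`), and `d₀(u*v) = d₁(u)*v + u*d₂(v)` for all `u, v`. -/
theorem t_xy_mem_triality
    {k S : Type*} [Field k] [NonUnitalNonAssocRing S] [Module k S]
    [SMulCommClass k S S] [IsScalarTower k S S]
    (h2 : (2 : k) ≠ 0)
    (q : QuadraticForm k S)
    (hmul : ∀ x y : S, q (x * y) = q x * q y)
    (hnd : ∀ x : S, (∀ y : S, QuadraticMap.polar q x y = 0) → x = 0)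
    (hassoc : ∀ x y z : S,
      QuadraticMap.polar q (x * y) z = QuadraticMap.polar q x (y * z))
    (x y : S)
    (d0 d1 d2 : S → S)
    (hd0 : ∀ z : S, d0 z = QuadraticMap.polar q x z • y - QuadraticMap.polar q y z • x)
    (hd1 : ∀ z : S, d1 z = ((2⁻¹ : k) * QuadraticMap.polar q x y) • z - (y * z) * x)
    (hd2 : ∀ z : S, d2 z = ((2⁻¹ : k) * QuadraticMap.polar q x y) • z - x * (z * y)) :
    (∀ u v : S, QuadraticMap.polar q (d0 u) v + QuadraticMap.polar q u (d0 v) = 0) ∧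
    (∀ u v : S, QuadraticMap.polar q (d1 u) v + QuadraticMap.polar q u (d1 v) = 0) ∧
    (∀ u v : S, QuadraticMap.polar q (d2 u) v + QuadraticMap.polar q u (d2 v) = 0) ∧
    (∀ u v : S, d0 (u * v) = d1 u * v + u * d2 v) := by
  -- linearized multiplicativity, left slot fixed
  have hB1 : ∀ a b d : S, QuadraticMap.polar q (a * b) (a * d) = q a * QuadraticMap.polar q b d := by
    intro a b d
    simp only [QuadraticMap.polar, ← mul_add, hmul]
    ring
  -- fully linearized multiplicativity
  have hB3 : ∀ a b c d : S,
      QuadraticMap.polar q (a * b) (c * d) + QuadraticMap.polar q (c * b) (a * d)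
        = QuadraticMap.polar q a c * QuadraticMap.polar q b d := by
    intro a b c d
    have h := hB1 (a + c) b d
    have hq : q (a + c) = QuadraticMap.polar q a c + q a + q c := by
      simp only [QuadraticMap.polar]; ring
    rw [add_mul, add_mul, QuadraticMap.polar_add_left, QuadraticMap.polar_add_right,
      QuadraticMap.polar_add_right, hq] at h
    have h1 := hB1 a b d
    have h2' := hB1 c b d
    linear_combination h - h1 - h2'
  -- (a*b)*c + (c*b)*a = B a c • b
  have hE1 : ∀ a b c : S, (a * b) * c + (c * b) * a = QuadraticMap.polar q a c • b := by
    intro a b c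
    have key : ∀ w : S,
        QuadraticMap.polar q ((a * b) * c + (c * b) * a - QuadraticMap.polar q a c • b) w = 0 := by
      intro w
      rw [QuadraticMap.polar_sub_left, QuadraticMap.polar_add_left,
        QuadraticMap.polar_smul_left, hassoc (a*b) c w, hassoc (c*b) a w]
      have h3 := hB3 a b c w
      rw [smul_eq_mul]
      linear_combination h3
    rw [← sub_eq_zero]
    exact hnd _ key
  -- a*(b*c) + c*(b*a) = B a c • b
  have hE2 : ∀ a b c : S, a * (b * c) + c * (b * a) = QuadraticMap.polar q a c • b := by
    intro a b c
    have key : ∀ w : S,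
        QuadraticMap.polar q (a * (b * c) + c * (b * a) - QuadraticMap.polar q a c • b) w = 0 := by
      intro w
      rw [QuadraticMap.polar_sub_left, QuadraticMap.polar_add_left,
        QuadraticMap.polar_smul_left]
      have e1 : QuadraticMap.polar q (a * (b * c)) w = QuadraticMap.polar q (w * a) (b * c) := by
        rw [QuadraticMap.polar_comm, hassoc]
      have e2 : QuadraticMap.polar q (c * (b * a)) w = QuadraticMap.polar q (w * c) (b * a) := by
        rw [QuadraticMap.polar_comm, hassoc]
      have h3 := hB3 w a b c
      have hc : QuadraticMap.polar q (w * c) (b * a) = QuadraticMap.polar q (b * a) (w * c) :=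
        QuadraticMap.polar_comm _ _ _
      have hc2 : QuadraticMap.polar q w b = QuadraticMap.polar q b w :=
        QuadraticMap.polar_comm _ _ _
      rw [e1, e2, hc, smul_eq_mul]
      linear_combination h3 + QuadraticMap.polar q a c * hc2
    rw [← sub_eq_zero]
    exact hnd _ key
  refine ⟨?_, ?_, ?_, ?_⟩
  · -- d0 skew
    intro u v
    rw [hd0 u, hd0 v, QuadraticMap.polar_sub_left, QuadraticMap.polar_sub_right,
      QuadraticMap.polar_smul_left, QuadraticMap.polar_smul_left,
      QuadraticMap.polar_smul_right, QuadraticMap.polar_smul_right]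
    have c1 : QuadraticMap.polar q x u = QuadraticMap.polar q u x := QuadraticMap.polar_comm _ _ _
    have c2 : QuadraticMap.polar q y u = QuadraticMap.polar q u y := QuadraticMap.polar_comm _ _ _
    simp only [smul_eq_mul]
    linear_combination QuadraticMap.polar q y v * c1 - QuadraticMap.polar q x v * c2
  · -- d1 skew
    intro u v
    rw [hd1 u, hd1 v, QuadraticMap.polar_sub_left, QuadraticMap.polar_sub_right,
      QuadraticMap.polar_smul_left, QuadraticMap.polar_smul_right,
      hassoc (y*u) x v]
    have e2 : QuadraticMap.polar q u ((y * v) * x) = QuadraticMap.polar q (x * u) (y * v) := by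
      rw [QuadraticMap.polar_comm, hassoc, QuadraticMap.polar_comm]
    rw [e2]
    have h3 := hB3 y u x v
    have hyx : QuadraticMap.polar q y x = QuadraticMap.polar q x y :=
      QuadraticMap.polar_comm _ _ _
    have hhalf : (2⁻¹ : k) * 2 = 1 := inv_mul_cancel₀ h2
    simp only [smul_eq_mul]
    linear_combination -h3 - QuadraticMap.polar q u v * hyx +
      QuadraticMap.polar q x y * QuadraticMap.polar q u v * hhalf
  · -- d2 skew
    intro u v
    rw [hd2 u, hd2 v, QuadraticMap.polar_sub_left, QuadraticMap.polar_sub_right,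
      QuadraticMap.polar_smul_left, QuadraticMap.polar_smul_right,
      hassoc x (u*y) v]
    have e2 : QuadraticMap.polar q u (x * (v * y)) = QuadraticMap.polar q x ((v * y) * u) := by
      rw [QuadraticMap.polar_comm q u, hassoc]
    rw [e2]
    have hsum : QuadraticMap.polar q x ((u * y) * v) + QuadraticMap.polar q x ((v * y) * u)
        = QuadraticMap.polar q u v * QuadraticMap.polar q x y := by
      rw [← QuadraticMap.polar_add_right, hE1 u y v, QuadraticMap.polar_smul_right, smul_eq_mul]
    have hhalf : (2⁻¹ : k) * 2 = 1 := inv_mul_cancel₀ h2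
    simp only [smul_eq_mul]
    linear_combination -hsum +
      QuadraticMap.polar q x y * QuadraticMap.polar q u v * hhalf
  · -- main identity
    intro u v
    rw [hd0, hd1, hd2, sub_mul, mul_sub, smul_mul_assoc, mul_smul_comm]
    have h1 : ((y * u) * x) * v = QuadraticMap.polar q (y * u) v • x - (v * x) * (y * u) :=
      eq_sub_of_add_eq (hE1 (y * u) x v)
    have h3 : (v * x) * (y * u) = QuadraticMap.polar q (v * x) u • y - u * (y * (v * x)) :=
      eq_sub_of_add_eq (hE2 (v * x) y u)
    have h4 : y * (v * x) = QuadraticMap.polar q y x • v - x * (v * y) :=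
      eq_sub_of_add_eq (hE2 y v x)
    have hb1 : QuadraticMap.polar q (y * u) v = QuadraticMap.polar q y (u * v) := hassoc y u v
    have hb2 : QuadraticMap.polar q (v * x) u = QuadraticMap.polar q x (u * v) := by
      rw [hassoc v x u, QuadraticMap.polar_comm, hassoc]
    have hb3 : QuadraticMap.polar q y x = QuadraticMap.polar q x y :=
      QuadraticMap.polar_comm _ _ _
    have hhalf : (2⁻¹ : k) * 2 = 1 := inv_mul_cancel₀ h2
    rw [h1, h3, h4, hb1, hb2, hb3]
    simp only [mul_sub, mul_smul_comm]
    match_scalars <;>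
      first
        | ring1
        | linear_combination QuadraticMap.polar q x y * hhalf
        | linear_combination -(QuadraticMap.polar q x y) * hhalf
end

section
/- The map θ : (d₀, d₁, d₂) ↦ (d₂, d₀, d₁) is a Lie algebra automorphism of the triality Lie algebra tri(S) of a symmetric composition algebra S, and θ³ = id. -/
section
variable {k S : Type*} [Field k] [NonUnitalNonAssocRing S] [Module k S]
  [SMulCommClass k S S] [IsScalarTower k S S]

/-- Triples of endomorphisms. -/
abbrev Triple (k S : Type*) [Field k] [AddCommGroup S] [Module k S] :=
  Module.End k S × Module.End k S × Module.End k S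

/-- Membership in the triality Lie algebra `tri(S)` of a symmetric composition
algebra `S`: all three components are in `so(S,b)` and the triality relation
`d₀(x*y) = d₁(x)*y + x*d₂(y)` holds. -/
def InTri (q : QuadraticForm k S) (d : Triple k S) : Prop :=
  (∀ x y : S, QuadraticMap.polar q (d.1 x) y + QuadraticMap.polar q x (d.1 y) = 0) ∧
  (∀ x y : S, QuadraticMap.polar q (d.2.1 x) y + QuadraticMap.polar q x (d.2.1 y) = 0) ∧
  (∀ x y : S, QuadraticMap.polar q (d.2.2 x) y + QuadraticMap.polar q x (d.2.2 y) = 0) ∧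
  (∀ x y : S, d.1 (x * y) = d.2.1 x * y + x * d.2.2 y)

/-- The cyclic permutation `θ : (d₀,d₁,d₂) ↦ (d₂,d₀,d₁)`. -/
def thetaMap (k S : Type*) [Field k] [AddCommGroup S] [Module k S] :
    Triple k S → Triple k S :=
  fun d => (d.2.2, d.1, d.2.1)

/-- The componentwise bracket on triples of endomorphisms. -/
def tripleBracket (d f : Triple k S) : Triple k S :=
  (⁅d.1, f.1⁆, ⁅d.2.1, f.2.1⁆, ⁅d.2.2, f.2.2⁆)


set_option linter.unusedSectionVars false in
lemma rot_aux (q : QuadraticForm k S)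
    (hnd : ∀ x : S, (∀ y : S, QuadraticMap.polar q x y = 0) → x = 0)
    (hassoc : ∀ x y z : S,
      QuadraticMap.polar q (x * y) z = QuadraticMap.polar q x (y * z))
    (d : Triple k S) (hd : InTri q d) :
    ∀ x y : S, d.2.2 (x * y) = d.1 x * y + x * d.2.1 y := by
  obtain ⟨h0, h1, h2', htri⟩ := hd
  intro x y
  have key : ∀ z, QuadraticMap.polar q (d.2.2 (x*y) - (d.1 x * y + x * d.2.1 y)) z = 0 := by
    intro z
    have eA : QuadraticMap.polar q (d.2.2 (x*y)) z
        = - QuadraticMap.polar q x (y * d.2.2 z) := by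
      have h := h2' (x*y) z
      have ha := hassoc x y (d.2.2 z)
      linear_combination h - ha
    have eB : QuadraticMap.polar q (d.1 x * y) z
        = - QuadraticMap.polar q x (d.2.1 y * z) - QuadraticMap.polar q x (y * d.2.2 z) := by
      have h := h0 x (y * z)
      have ha := hassoc (d.1 x) y z
      have ht : d.1 (y * z) = d.2.1 y * z + y * d.2.2 z := htri y z
      have hadd : QuadraticMap.polar q x (d.2.1 y * z + y * d.2.2 z)
          = QuadraticMap.polar q x (d.2.1 y * z) + QuadraticMap.polar q x (y * d.2.2 z) :=
        QuadraticMap.polar_add_right q _ _ _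
      rw [ht, hadd] at h
      linear_combination ha + h
    have eC : QuadraticMap.polar q (x * d.2.1 y) z
        = QuadraticMap.polar q x (d.2.1 y * z) := hassoc x (d.2.1 y) z
    have expand : QuadraticMap.polar q (d.2.2 (x*y) - (d.1 x * y + x * d.2.1 y)) z
        = QuadraticMap.polar q (d.2.2 (x*y)) z - QuadraticMap.polar q (d.1 x * y) z
          - QuadraticMap.polar q (x * d.2.1 y) z := by
      rw [QuadraticMap.polar_sub_left, QuadraticMap.polar_add_left]
      ring
    rw [expand, eA, eB, eC]; ring
  exact sub_eq_zero.mp (hnd _ key)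

/-- `θ : (d₀,d₁,d₂) ↦ (d₂,d₀,d₁)` is a Lie algebra automorphism of the
triality Lie algebra `tri(S)` of a symmetric composition algebra `S`, with `θ³ = id`:
it is linear, bijective, preserves `tri(S)`, respects the (componentwise) bracket,
and `θ∘θ∘θ = id`. -/
theorem theta_is_automorphism_of_tri
    (h2 : (2 : k) ≠ 0)
    (q : QuadraticForm k S)
    (hmul : ∀ x y : S, q (x * y) = q x * q y)
    (hnd : ∀ x : S, (∀ y : S, QuadraticMap.polar q x y = 0) → x = 0)
    (hassoc : ∀ x y z : S,
      QuadraticMap.polar q (x * y) z = QuadraticMap.polar q x (y * z)) :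
    (∀ d f : Triple k S, thetaMap k S (d + f) = thetaMap k S d + thetaMap k S f) ∧
    (∀ (a : k) (d : Triple k S), thetaMap k S (a • d) = a • thetaMap k S d) ∧
    Function.Bijective (thetaMap k S) ∧
    (∀ d : Triple k S, InTri q d → InTri q (thetaMap k S d)) ∧
    (∀ d f : Triple k S, InTri q d → InTri q f →
      thetaMap k S (tripleBracket d f) = tripleBracket (thetaMap k S d) (thetaMap k S f)) ∧
    (∀ d : Triple k S, thetaMap k S (thetaMap k S (thetaMap k S d)) = d) := by
  refine ⟨fun d f => rfl, fun a d => rfl,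
    Function.bijective_iff_has_inverse.mpr
      ⟨fun d => thetaMap k S (thetaMap k S d), fun d => rfl, fun d => rfl⟩,
    ?_, fun d f _ _ => rfl, fun d => rfl⟩
  rintro d ⟨h0, h1, h2', htri⟩
  exact ⟨h2', h0, h1, rot_aux q hnd hassoc d ⟨h0, h1, h2', htri⟩⟩

end
end

section
/- Let S₂ be the two-dimensional split para-Hurwitz algebra with basis {1, u}, product 1•1 = 1, 1•u = u•1 = −u, u•u = 1, and norm q(1) = 1, q(u) = −1, b(1,u) = 0. Then tri(S₂) = {(α₀σ, α₁σ, α₂σ) : α₀, α₁, α₂ ∈ k, α₀ + α₁ + α₂ = 0}, where σ is the linear map with σ(1) = u, σ(u) = 1. -/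
section
variable (k : Type*) [Field k]

/-- The split two-dimensional para-Hurwitz algebra `S₂ = k × k`, with `1 = (1,0)`
and `u = (0,1)` in the basis `{1, u}`: `1•1 = 1`, `1•u = u•1 = -u`, `u•u = 1`. -/
def S2mul : k × k → k × k → k × k :=
  fun p q => (p.1 * q.1 + p.2 * q.2, -(p.1 * q.2 + p.2 * q.1))

/-- The polar form of the norm `q(α1 + βu) = α² - β²` on `S₂`:
`b(1,1) = 2`, `b(u,u) = -2`, `b(1,u) = 0`. -/
def S2form : k × k → k × k → k :=
  fun p q => 2 * p.1 * q.1 - 2 * p.2 * q.2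

/-- `σ`, the linear map with `σ(1) = u` and `σ(u) = 1`. -/
def S2sigma : Module.End k (k × k) := (LinearEquiv.prodComm k k k).toLinearMap

/-- Membership in `tri(S₂)`. -/
def InTriS2 (d : Module.End k (k × k) × Module.End k (k × k) × Module.End k (k × k)) :
    Prop :=
  (∀ x y : k × k, S2form k (d.1 x) y + S2form k x (d.1 y) = 0) ∧
  (∀ x y : k × k, S2form k (d.2.1 x) y + S2form k x (d.2.1 y) = 0) ∧
  (∀ x y : k × k, S2form k (d.2.2 x) y + S2form k x (d.2.2 y) = 0) ∧
  (∀ x y : k × k, d.1 (S2mul k x y) = S2mul k (d.2.1 x) y + S2mul k x (d.2.2 y))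

/-- Any map skew-adjoint w.r.t. `S2form` is a scalar multiple of `σ`. -/
lemma skew_eq_smul_sigma (h2 : (2 : k) ≠ 0) (d : Module.End k (k × k))
    (h : ∀ x y : k × k, S2form k (d x) y + S2form k x (d y) = 0) :
    d = (d (1, 0)).2 • S2sigma k := by
  have h00 := h (1, 0) (1, 0)
  have h11 := h (0, 1) (0, 1)
  have h01 := h (1, 0) (0, 1)
  simp [S2form] at h00 h11 h01
  have ha : (d (1, 0)).1 = 0 := by
    have : (2 * 2) * (d (1, 0)).1 = 0 := by linear_combination h00
    exact (mul_eq_zero.mp this).resolve_left (mul_ne_zero h2 h2)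
  have he : (d (0, 1)).2 = 0 := by
    have : (2 * 2) * (d (0, 1)).2 = 0 := by linear_combination -h11
    exact (mul_eq_zero.mp this).resolve_left (mul_ne_zero h2 h2)
  have hc : (d (0, 1)).1 = (d (1, 0)).2 := by
    have : 2 * ((d (0, 1)).1 - (d (1, 0)).2) = 0 := by linear_combination h01
    have := (mul_eq_zero.mp this).resolve_left h2
    linear_combination this
  apply LinearMap.ext
  intro x
  have hx : x = x.1 • ((1, 0) : k × k) + x.2 • ((0, 1) : k × k) := by
    ext <;> simp
  rw [hx, map_add, map_smul, map_smul]
  ext <;> simp [S2sigma, ha, he, hc] <;> ring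

/-- `tri(S₂) = {(α₀σ, α₁σ, α₂σ) : α₀ + α₁ + α₂ = 0}`. -/
theorem tri_S2_description (h2 : (2 : k) ≠ 0) :
    ∀ d : Module.End k (k × k) × Module.End k (k × k) × Module.End k (k × k),
      InTriS2 k d ↔
        ∃ α₀ α₁ α₂ : k, α₀ + α₁ + α₂ = 0 ∧
          d = (α₀ • S2sigma k, α₁ • S2sigma k, α₂ • S2sigma k) := by
  intro d
  constructor
  · rintro ⟨h0, h1, h2', hmul⟩
    refine ⟨(d.1 (1, 0)).2, (d.2.1 (1, 0)).2, (d.2.2 (1, 0)).2, ?_, ?_⟩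
    · have := hmul (1, 0) (1, 0)
      rw [skew_eq_smul_sigma k h2 d.1 h0, skew_eq_smul_sigma k h2 d.2.1 h1,
        skew_eq_smul_sigma k h2 d.2.2 h2'] at this
      simp [S2mul, S2sigma, Prod.ext_iff] at this
      linear_combination this
    · have e0 := skew_eq_smul_sigma k h2 d.1 h0
      have e1 := skew_eq_smul_sigma k h2 d.2.1 h1
      have e2 := skew_eq_smul_sigma k h2 d.2.2 h2'
      exact Prod.ext e0 (Prod.ext e1 e2)
  · rintro ⟨α₀, α₁, α₂, hsum, rfl⟩
    refine ⟨?_, ?_, ?_, ?_⟩ <;> intro x y <;>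
        simp [S2form, S2mul, S2sigma, Prod.ext_iff]
    · ring
    · ring
    · ring
    · exact ⟨by linear_combination -(x.2 * y.1 + x.1 * y.2) * hsum,
        by linear_combination (x.2 * y.2 + x.1 * y.1) * hsum⟩

end
end

section
/- Let H be a Jordan algebra over a field k of characteristic ≠ 2 and Q a quaternion algebra with trace-zero part Q⁰ and polar form b. Then the bracket on T(Q,H) = (Q⁰ ⊗ H) ⊕ Der(H) defined by: the usual commutator on Der(H); [d, a⊗x] = a⊗d(x); and [a⊗x, b⊗y] = ([a,b] ⊗ xy) − 2b(a,b)d_{x,y}, where d_{x,y} = [L_x, L_y], satisfies the Jacobi identity, making T(Q,H) a Lie algebra. -/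
set_option linter.unusedSectionVars false
set_option maxHeartbeats 2000000

open scoped TensorProduct

section
open QuadraticMap
variable {k : Type*} [Field k]
variable {H : Type*} [NonUnitalNonAssocRing H] [Module k H]
  [SMulCommClass k H H] [IsScalarTower k H H]

lemma tits_myhalf (h2 : (2 : k) ≠ 0) {a : H} (h : a + a = 0) : a = 0 := by
  have h' : (2 : k) • a = 0 := by rw [two_smul]; exact h
  have := congrArg (fun t => (2:k)⁻¹ • t) h'
  simpa [smul_smul, inv_mul_cancel₀ h2] using this

lemma tits_lemA (h2 : (2 : k) ≠ 0)
    (hj : ∀ x y : H, ((x * y) * (x * x)) = x * (y * (x * x))) :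
    ∀ x z y : H,
      (z*y)*(x*x) + (x*y)*(x*z) + (x*y)*(z*x)
        - z*(y*(x*x)) - x*(y*(x*z)) - x*(y*(z*x)) = 0 := by
  intro x z y
  apply tits_myhalf h2
  have e1 := hj (x+z) y
  have e2 := hj (x-z) y
  have e3 := hj z y
  simp only [add_mul, mul_add, sub_mul, mul_sub] at e1 e2
  linear_combination (norm := abel) e1 - e2 - e3 - e3

/-- full linearization of the Jordan identity -/
lemma tits_lemE (h2 : (2 : k) ≠ 0) (hc : ∀ x y : H, x * y = y * x)
    (hj : ∀ x y : H, ((x * y) * (x * x)) = x * (y * (x * x))) :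
    ∀ a b c w : H,
      (a*w)*(b*c) + (b*w)*(c*a) + (c*w)*(a*b)
        = a*(w*(b*c)) + b*(w*(c*a)) + c*(w*(a*b)) := by
  intro a b c w
  -- from tits_lemA with x := b + c etc.; mixed part.  Use (x,z,y) = (b?,..)
  -- E'(x,w',z;y)=0 with (x,w',z,y) := (b,c,a,w):
  have eA1 := tits_lemA h2 hj (b+c) a w
  have eA2 := tits_lemA h2 hj b a w
  have eA3 := tits_lemA h2 hj c a w
  simp only [add_mul, mul_add] at eA1
  rw [← sub_eq_zero]
  apply tits_myhalf h2
  -- comm corrections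
  have c1 : (a*w)*(c*b) = (a*w)*(b*c) := by rw [hc c b]
  have c2 : (c*w)*(b*a) = (c*w)*(a*b) := by rw [hc b a]
  have c3 : (b*w)*(a*c) = (b*w)*(c*a) := by rw [hc a c]
  have c4 : a*(w*(c*b)) = a*(w*(b*c)) := by rw [hc c b]
  have c5 : c*(w*(b*a)) = c*(w*(a*b)) := by rw [hc b a]
  have c6 : b*(w*(a*c)) = b*(w*(c*a)) := by rw [hc a c]
  linear_combination (norm := abel) eA1 - eA2 - eA3 - c1 - c2 - c3 + c4 + c5 + c6

lemma tits_lemDer (hc : ∀ x y : H, x * y = y * x)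
    (hE : ∀ a b c w : H,
      (a*w)*(b*c) + (b*w)*(c*a) + (c*w)*(a*b)
        = a*(w*(b*c)) + b*(w*(c*a)) + c*(w*(a*b))) :
    ∀ x y u v : H,
      x*(y*(u*v)) - y*(x*(u*v))
        = (x*(y*u) - y*(x*u))*v + u*(x*(y*v) - y*(x*v)) := by
  intro x y u v
  have e1 := hE x u v y
  have e2 := hE y u v x
  rw [sub_mul, mul_sub]
  have c1 : (x*y)*(u*v) = (y*x)*(u*v) := by rw [hc x y]
  have c2 : (u*y)*(v*x) = (v*x)*(y*u) := by rw [hc u y]; exact hc (y*u) (v*x)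
  have c3 : (u*x)*(v*y) = (v*y)*(x*u) := by rw [hc u x]; exact hc (x*u) (v*y)
  have c4 : u*(x*(v*y)) = u*(x*(y*v)) := by rw [hc v y]
  have c5 : u*(y*(v*x)) = u*(y*(x*v)) := by rw [hc v x]
  have c6 : v*(x*(y*u)) = (x*(y*u))*v := hc v (x*(y*u))
  have c7 : v*(y*(x*u)) = (y*(x*u))*v := hc v (y*(x*u))
  linear_combination (norm := abel) e2 - e1 + c1 + c2 - c3 + c4 - c5 + c6 - c7

lemma tits_lemC (hc : ∀ x y : H, x * y = y * x)
    (hE : ∀ a b c w : H,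
      (a*w)*(b*c) + (b*w)*(c*a) + (c*w)*(a*b)
        = a*(w*(b*c)) + b*(w*(c*a)) + c*(w*(a*b))) :
    ∀ x y z w : H,
      ((x*y)*(z*w) - z*((x*y)*w)) + ((y*z)*(x*w) - x*((y*z)*w))
        + ((z*x)*(y*w) - y*((z*x)*w)) = 0 := by
  intro x y z w
  have e1 := hE x y z w
  have c1 : (x*y)*(z*w) = (z*w)*(x*y) := hc _ _
  have c2 : (y*z)*(x*w) = (x*w)*(y*z) := hc _ _
  have c3 : (z*x)*(y*w) = (y*w)*(z*x) := hc _ _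
  have c4 : z*((x*y)*w) = z*(w*(x*y)) := by rw [hc (x*y) w]
  have c5 : x*((y*z)*w) = x*(w*(y*z)) := by rw [hc (y*z) w]
  have c6 : y*((z*x)*w) = y*(w*(z*x)) := by rw [hc (z*x) w]
  linear_combination (norm := abel) e1 + c1 + c2 + c3 - c4 - c5 - c6

end

section
open QuadraticMap
variable {k : Type*} [Field k]
variable {Q : Type*} [NonAssocRing Q] [Module k Q] [SMulCommClass k Q Q]
    [IsScalarTower k Q Q] (q : QuadraticForm k Q)

lemma tits_q1 (hmulq : ∀ x y : Q, q (x * y) = q x * q y) (x z y : Q) :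
    polar q (x*y) (z*y) = polar q x z * q y := by
  simp only [polar, ← add_mul, hmulq]
  ring

lemma tits_q2 (hmulq : ∀ x y : Q, q (x * y) = q x * q y) (x y z w : Q) :
    polar q (x*y) (z*w) + polar q (x*w) (z*y) = polar q x z * polar q y w := by
  have e1 := tits_q1 q hmulq x z (y + w)
  have e2 := tits_q1 q hmulq x z y
  have e3 := tits_q1 q hmulq x z w
  simp only [mul_add, polar_add_left, polar_add_right] at e1
  have e4 : q (y + w) = q y + q w + polar q y w := by
    simp only [polar]; ring
  rw [e4] at e1
  linear_combination e1 - e2 - e3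

lemma tits_q6 (hmulq : ∀ x y : Q, q (x * y) = q x * q y) (x y z : Q) :
    polar q (x*y) z = polar q y 1 * polar q x z - polar q x (z*y) := by
  have e := tits_q2 q hmulq x y z 1
  simp only [mul_one, one_mul] at e
  have hc : polar q y 1 = polar q 1 y := polar_comm _ _ _
  linear_combination e

lemma tits_q7 (hmulq : ∀ x y : Q, q (x * y) = q x * q y) (x y z : Q) :
    polar q (x*y) z = polar q x 1 * polar q y z - polar q y (x*z) := by
  have e := tits_q2 q hmulq x y 1 z
  simp only [mul_one, one_mul] at e
  have hc : polar q x 1 = polar q 1 x := polar_comm _ _ _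
  have hc2 : polar q (x*z) y = polar q y (x*z) := polar_comm _ _ _
  linear_combination e - hc2

lemma tits_q8 (h2 : (2:k) ≠ 0) (hmulq : ∀ x y : Q, q (x * y) = q x * q y) (x y w : Q) :
    polar q (x*y) (x*w) = q x * polar q y w := by
  have e := tits_q2 q hmulq x y x w
  rw [polar_comm q (x*w) (x*y)] at e
  have hps : polar q x x = 2 * q x := by
    rw [polar_self]; push_cast [two_smul]; ring
  rw [hps] at e
  refine mul_left_cancel₀ h2 ?_
  linear_combination e

lemma tits_qCH (hmulq : ∀ x y : Q, q (x * y) = q x * q y)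
    (hnd : ∀ x : Q, (∀ y : Q, polar q x y = 0) → x = 0) (x : Q) :
    x*x = polar q x 1 • x - q x • (1:Q) := by
  rw [← sub_eq_zero]
  apply hnd
  intro z
  have e1 := tits_q2 q hmulq x x z 1
  have e2 := tits_q1 q hmulq 1 z x
  simp only [mul_one, one_mul] at e1 e2
  have hc : polar q 1 z = polar q z 1 := polar_comm _ _ _
  simp only [polar_sub_left, polar_smul_left, smul_eq_mul]
  linear_combination e1 - e2
lemma tits_qaltL (h2 : (2:k) ≠ 0) (hmulq : ∀ x y : Q, q (x * y) = q x * q y)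
    (hnd : ∀ x : Q, (∀ y : Q, polar q x y = 0) → x = 0) (x y : Q) :
    x*(x*y) = (x*x)*y := by
  have h1 : (x*x)*y = polar q x 1 • (x*y) - q x • y := by
    rw [tits_qCH q hmulq hnd x, sub_mul, smul_mul_assoc, smul_mul_assoc, one_mul]
  rw [h1, ← sub_eq_zero]
  apply hnd
  intro w
  have e1 := tits_q7 q hmulq x (x*y) w
  have e2 := tits_q8 q h2 hmulq x y w
  rw [polar_sub_left, polar_sub_left, polar_smul_left, polar_smul_left,
    smul_eq_mul, smul_eq_mul]
  linear_combination e1 - e2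

lemma tits_qaltR (h2 : (2:k) ≠ 0) (hmulq : ∀ x y : Q, q (x * y) = q x * q y)
    (hnd : ∀ x : Q, (∀ y : Q, polar q x y = 0) → x = 0) (x y : Q) :
    (y*x)*x = y*(x*x) := by
  have h1 : y*(x*x) = polar q x 1 • (y*x) - q x • y := by
    rw [tits_qCH q hmulq hnd x, mul_sub, mul_smul_comm, mul_smul_comm, mul_one]
  rw [h1, ← sub_eq_zero]
  apply hnd
  intro w
  have e1 := tits_q6 q hmulq (y*x) x w
  have e2 := tits_q1 q hmulq y w x
  rw [polar_sub_left, polar_sub_left, polar_smul_left, polar_smul_left,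
    smul_eq_mul, smul_eq_mul]
  linear_combination e1 - e2

lemma tits_hA01 (h2 : (2:k) ≠ 0) (hmulq : ∀ x y : Q, q (x * y) = q x * q y)
    (hnd : ∀ x : Q, (∀ y : Q, polar q x y = 0) → x = 0) (x y z : Q) :
    (x*y)*z - x*(y*z) = -((y*x)*z - y*(x*z)) := by
  have e := tits_qaltL q h2 hmulq hnd (x+y) z
  have e1 := tits_qaltL q h2 hmulq hnd x z
  have e2 := tits_qaltL q h2 hmulq hnd y z
  simp only [add_mul, mul_add] at e
  linear_combination (norm := abel) e1 + e2 - e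

lemma tits_hA12 (h2 : (2:k) ≠ 0) (hmulq : ∀ x y : Q, q (x * y) = q x * q y)
    (hnd : ∀ x : Q, (∀ y : Q, polar q x y = 0) → x = 0) (x y z : Q) :
    (x*y)*z - x*(y*z) = -((x*z)*y - x*(z*y)) := by
  have e := tits_qaltR q h2 hmulq hnd (y+z) x
  have e1 := tits_qaltR q h2 hmulq hnd y x
  have e2 := tits_qaltR q h2 hmulq hnd z x
  simp only [add_mul, mul_add] at e
  linear_combination (norm := abel) e - e1 - e2

lemma tits_hv23 (h2 : (2:k) ≠ 0) (hmulq : ∀ x y : Q, q (x * y) = q x * q y)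
    (hnd : ∀ x : Q, (∀ y : Q, polar q x y = 0) → x = 0) (x y z : Q) :
    polar q ((x*y)*z - x*(y*z)) z = 0 := by
  have e1 := tits_q6 q hmulq (x*y) z z
  have e2 : polar q (x*y) (z*z) = polar q z 1 * polar q (x*y) z - q z * polar q (x*y) 1 := by
    rw [tits_qCH q hmulq hnd z, polar_sub_right, polar_smul_right, polar_smul_right,
      smul_eq_mul, smul_eq_mul]
  have e3 := tits_q7 q hmulq x (y*z) z
  have e5 : polar q (y*z) z = q z * polar q y 1 := by
    have a1 := tits_q6 q hmulq y z z
    have a2 : polar q y (z*z) = polar q z 1 * polar q y z - q z * polar q y 1 := by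
      rw [tits_qCH q hmulq hnd z, polar_sub_right, polar_smul_right, polar_smul_right,
        smul_eq_mul, smul_eq_mul]
    linear_combination a1 - a2
  have e6 : polar q (x*y) 1 = polar q y 1 * polar q x 1 - polar q x y := by
    have := tits_q6 q hmulq x y 1
    rw [one_mul] at this
    linear_combination this
  have e7 : polar q (y*z) (x*z) = polar q y x * q z := tits_q1 q hmulq y x z
  have hc : polar q y x = polar q x y := polar_comm _ _ _
  rw [polar_sub_left]
  linear_combination e1 - e2 - e3 - polar q x 1 * e5 + e7 + q z * e6 + q z * hc
lemma tits_qassoc (h2 : (2:k) ≠ 0)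
    (hdim : Module.finrank k Q = 4)
    (hmulq : ∀ x y : Q, q (x * y) = q x * q y)
    (hnd : ∀ x : Q, (∀ y : Q, polar q x y = 0) → x = 0) :
    ∀ x y z : Q, (x*y)*z = x*(y*z) := by
  classical
  have hFD : FiniteDimensional k Q := FiniteDimensional.of_finrank_pos (by omega)
  have hnontriv : Nontrivial Q := Module.nontrivial_of_finrank_pos
    (R := k) (by omega : 0 < Module.finrank k Q)
  -- the multilinear map F(v) = polar q ([v0,v1,v2]) v3
  let F : MultilinearMap k (fun _ : Fin 4 => Q) k :=
  { toFun := fun v => polar q ((v 0 * v 1) * v 2 - v 0 * (v 1 * v 2)) (v 3)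
    map_update_add' := by
      intro dec m i a b
      fin_cases i <;>
        simp [Function.update_apply, (Fin.ne_of_val_ne (by decide) : (0:Fin 4) ≠ 1), (Fin.ne_of_val_ne (by decide) : (0:Fin 4) ≠ 2), (Fin.ne_of_val_ne (by decide) : (0:Fin 4) ≠ 3), (Fin.ne_of_val_ne (by decide) : (1:Fin 4) ≠ 0), (Fin.ne_of_val_ne (by decide) : (1:Fin 4) ≠ 2), (Fin.ne_of_val_ne (by decide) : (1:Fin 4) ≠ 3), (Fin.ne_of_val_ne (by decide) : (2:Fin 4) ≠ 0), (Fin.ne_of_val_ne (by decide) : (2:Fin 4) ≠ 1), (Fin.ne_of_val_ne (by decide) : (2:Fin 4) ≠ 3), (Fin.ne_of_val_ne (by decide) : (3:Fin 4) ≠ 0), (Fin.ne_of_val_ne (by decide) : (3:Fin 4) ≠ 1), (Fin.ne_of_val_ne (by decide) : (3:Fin 4) ≠ 2), add_mul, mul_add,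
          add_sub_add_comm, polar_add_left, polar_add_right]
    map_update_smul' := by
      intro dec m i c a
      fin_cases i <;>
        simp [Function.update_apply, (Fin.ne_of_val_ne (by decide) : (0:Fin 4) ≠ 1), (Fin.ne_of_val_ne (by decide) : (0:Fin 4) ≠ 2), (Fin.ne_of_val_ne (by decide) : (0:Fin 4) ≠ 3), (Fin.ne_of_val_ne (by decide) : (1:Fin 4) ≠ 0), (Fin.ne_of_val_ne (by decide) : (1:Fin 4) ≠ 2), (Fin.ne_of_val_ne (by decide) : (1:Fin 4) ≠ 3), (Fin.ne_of_val_ne (by decide) : (2:Fin 4) ≠ 0), (Fin.ne_of_val_ne (by decide) : (2:Fin 4) ≠ 1), (Fin.ne_of_val_ne (by decide) : (2:Fin 4) ≠ 3), (Fin.ne_of_val_ne (by decide) : (3:Fin 4) ≠ 0), (Fin.ne_of_val_ne (by decide) : (3:Fin 4) ≠ 1), (Fin.ne_of_val_ne (by decide) : (3:Fin 4) ≠ 2), smul_mul_assoc,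
          mul_smul_comm, ← smul_sub, polar_smul_left, polar_smul_right] }
  have hF : ∀ v : Fin 4 → Q,
      F v = polar q ((v 0 * v 1) * v 2 - v 0 * (v 1 * v 2)) (v 3) := fun _ => rfl
  -- antisymmetry in slots 2,3
  have h23 : ∀ x y z w : Q,
      polar q ((x*y)*z - x*(y*z)) w = - polar q ((x*y)*w - x*(y*w)) z := by
    intro x y z w
    have e := tits_hv23 q h2 hmulq hnd x y (z+w)
    have e1 := tits_hv23 q h2 hmulq hnd x y z
    have e2 := tits_hv23 q h2 hmulq hnd x y w
    simp only [mul_add, add_mul, polar_add_right, add_sub_add_comm, polar_add_left] at e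
    linear_combination e - e1 - e2
  -- the alternating map
  let f : Q [⋀^Fin 4]→ₗ[k] k :=
  { toMultilinearMap := F
    map_eq_zero_of_eq' := by
      intro v i j hveq hij
      have hz : ∀ x y z w : Q, x = z →
          polar q ((x*y)*z - x*(y*z)) w = 0 := by
        intro x y z w h; subst h
        have := tits_hA12 q h2 hmulq hnd x y x
        have h0 : (x*y)*x - x*(y*x) = 0 := by
          have h3 : (x*x)*y - x*(x*y) = 0 := by
            rw [tits_qaltL q h2 hmulq hnd x y, sub_self]
          linear_combination (norm := abel) this - h3
        rw [h0]
        simp [polar]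
      -- reduce all index cases
      have key : ∀ x y z w : Q,
          (x = y ∨ y = z ∨ x = z ∨ z = w ∨ x = w ∨ y = w) →
          polar q ((x*y)*z - x*(y*z)) w = 0 := by
        rintro x y z w (h|h|h|h|h|h)
        · subst h
          rw [tits_qaltL q h2 hmulq hnd x z, sub_self]; simp [polar]
        · subst h
          rw [tits_qaltR q h2 hmulq hnd y x, sub_self]; simp [polar]
        · exact hz x y z w h
        · subst h; exact tits_hv23 q h2 hmulq hnd x y z
        · subst h
          rw [h23]
          rw [hz x y x z rfl]
          exact neg_zero
        · subst h
          rw [h23]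
          have := tits_hA12 q h2 hmulq hnd x y y
          have h0 : (x*y)*y - x*(y*y) = 0 := by
            rw [tits_qaltR q h2 hmulq hnd y x, sub_self]
          rw [h0] at this ⊢
          simp [polar]
      show polar (⇑q) ((v 0 * v 1) * v 2 - v 0 * (v 1 * v 2)) (v 3) = 0
      apply key
      fin_cases i <;> fin_cases j <;>
        first
        | exact absurd rfl hij
        | exact Or.inl hveq
        | exact Or.inl hveq.symm
        | exact Or.inr (Or.inl hveq)
        | exact Or.inr (Or.inl hveq.symm)
        | exact Or.inr (Or.inr (Or.inl hveq))
        | exact Or.inr (Or.inr (Or.inl hveq.symm))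
        | exact Or.inr (Or.inr (Or.inr (Or.inl hveq)))
        | exact Or.inr (Or.inr (Or.inr (Or.inl hveq.symm)))
        | exact Or.inr (Or.inr (Or.inr (Or.inr (Or.inl hveq))))
        | exact Or.inr (Or.inr (Or.inr (Or.inr (Or.inl hveq.symm))))
        | exact Or.inr (Or.inr (Or.inr (Or.inr (Or.inr hveq))))
        | exact Or.inr (Or.inr (Or.inr (Or.inr (Or.inr hveq.symm))))
    }
  have hf1 : ∀ v : Fin 4 → Q, v 0 = 1 → f v = 0 := by
    intro v hv
    show F v = 0
    rw [hF, hv, one_mul, one_mul, sub_self]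
    simp [polar]
  -- basis
  let b : Module.Basis (Fin 4) k Q := Module.finBasisOfFinrankEq k Q hdim
  have hdet := f.eq_smul_basis_det b
  have hmu : ∀ j : Fin 4, b.repr 1 j • f ⇑b = 0 := by
    intro j
    have h0 : f (Function.update (⇑b) j 1) = 0 := by
      by_cases hj : j = 0
      · subst hj; exact hf1 _ (Function.update_self _ _ _)
      · have hs := f.map_swap (Function.update (⇑b) j 1) (Ne.symm hj : (0:Fin 4) ≠ j)
        have : f (Function.update (⇑b) j 1 ∘ Equiv.swap 0 j) = 0 := by
          apply hf1
          show Function.update (⇑b) j 1 (Equiv.swap 0 j 0) = 1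
          rw [Equiv.swap_apply_left, Function.update_self]
        rw [this] at hs
        exact neg_eq_zero.mp hs.symm
    have hrep : (1:Q) = ∑ i : Fin 4, b.repr 1 i • b i := (Module.Basis.sum_repr b 1).symm
    rw [hrep] at h0
    have hsum := (f.toMultilinearMap).map_update_sum (Finset.univ : Finset (Fin 4)) j
      (fun i => b.repr 1 i • b i) (⇑b)
    have h1 : ∀ i : Fin 4, f.toMultilinearMap (Function.update (⇑b) j (b.repr 1 i • b i))
        = b.repr 1 i • f.toMultilinearMap (Function.update (⇑b) j (b i)) := by
      intro i
      exact (f.toMultilinearMap).map_update_smul (⇑b) j _ _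
    have h2' : ∀ i : Fin 4, i ≠ j →
        f.toMultilinearMap (Function.update (⇑b) j (b i)) = 0 := by
      intro i hij
      exact f.map_eq_zero_of_eq _ (by
        rw [Function.update_self, Function.update_of_ne hij]) hij
    have h3 : f.toMultilinearMap (Function.update (⇑b) j (b j)) = f ⇑b := by
      rw [Function.update_eq_self]; rfl
    have : f.toMultilinearMap (Function.update (⇑b) j (∑ i : Fin 4, b.repr 1 i • b i))
        = b.repr 1 j • f ⇑b := by
      rw [hsum]
      rw [Finset.sum_eq_single j]
      · rw [h1 j, h3]
      · intro i _ hij; rw [h1 i, h2' i hij, smul_zero]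
      · intro h; exact absurd (Finset.mem_univ j) h
    rw [← this]
    exact h0
  have hfb : f ⇑b = 0 := by
    by_contra hne
    have : ∀ j : Fin 4, b.repr 1 j = 0 := by
      intro j
      rcases smul_eq_zero.mp (hmu j) with h | h
      · exact h
      · exact absurd h hne
    have h1 : (1:Q) = 0 := by
      have := (Module.Basis.sum_repr b 1).symm
      rw [this]
      simp [‹∀ j : Fin 4, b.repr 1 j = 0›]
    exact one_ne_zero h1
  have hf0 : ∀ v, f v = 0 := by
    intro v
    rw [hdet, hfb]
    simp
  intro x y z
  rw [← sub_eq_zero]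
  apply hnd
  intro w
  have := hf0 ![x, y, z, w]
  rw [show f ![x,y,z,w] = F ![x,y,z,w] from rfl, hF] at this
  simpa using this
lemma tits_qswap (hmulq : ∀ x y : Q, q (x * y) = q x * q y)
    (hnd : ∀ x : Q, (∀ y : Q, polar q x y = 0) → x = 0)
    {a b : Q} (ha : polar q a 1 = 0) (hb : polar q b 1 = 0) :
    a*b + b*a = -(polar q a b) • (1:Q) := by
  have e := tits_qCH q hmulq hnd (a+b)
  have ea := tits_qCH q hmulq hnd a
  have eb := tits_qCH q hmulq hnd b
  rw [ha, zero_smul, zero_sub] at ea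
  rw [hb, zero_smul, zero_sub] at eb
  have hq : q (a+b) = q a + q b + polar q a b := by
    simp only [polar]; ring
  rw [polar_add_left, ha, hb, add_zero, zero_smul, zero_sub, hq] at e
  simp only [add_mul, mul_add] at e
  rw [ea, eb] at e
  linear_combination (norm := module) e

lemma tits_qdc (h2 : (2:k) ≠ 0) (hdim : Module.finrank k Q = 4)
    (hmulq : ∀ x y : Q, q (x * y) = q x * q y)
    (hnd : ∀ x : Q, (∀ y : Q, polar q x y = 0) → x = 0)
    {a b c : Q} (ha : polar q a 1 = 0) (hb : polar q b 1 = 0) (hc : polar q c 1 = 0) :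
    (a*b - b*a)*c - c*(a*b - b*a)
      = (2 * polar q a c) • b - (2 * polar q b c) • a := by
  have assoc := tits_qassoc q h2 hdim hmulq hnd
  have hca : c*a = -(a*c) - polar q a c • 1 := by
    have := tits_qswap q hmulq hnd ha hc
    rw [neg_smul] at this
    linear_combination (norm := module) this
  have hcb : c*b = -(b*c) - polar q b c • 1 := by
    have := tits_qswap q hmulq hnd hb hc
    rw [neg_smul] at this
    linear_combination (norm := module) this
  have h1 : c*(a*b) = (a*b)*c + polar q b c • a - polar q a c • b := by
    rw [← assoc c a b, hca, sub_mul, neg_mul, smul_mul_assoc, one_mul,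
      assoc a c b, hcb, mul_sub, mul_neg, mul_smul_comm, mul_one, ← assoc a b c]
    abel
  have h2' : c*(b*a) = (b*a)*c + polar q a c • b - polar q b c • a := by
    rw [← assoc c b a, hcb, sub_mul, neg_mul, smul_mul_assoc, one_mul,
      assoc b c a, hca, mul_sub, mul_neg, mul_smul_comm, mul_one, ← assoc b a c]
    abel
  rw [sub_mul, mul_sub, h1, h2']
  module

lemma tits_qcyc (hmulq : ∀ x y : Q, q (x * y) = q x * q y)
    {a b c : Q} (ha : polar q a 1 = 0) (hb : polar q b 1 = 0) (hc : polar q c 1 = 0) :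
    polar q (a*b - b*a) c = polar q (b*c - c*b) a
      ∧ polar q (a*b - b*a) c = polar q (c*a - a*c) b := by
  have hq7 : ∀ x y z : Q, polar q x 1 = 0 → polar q (x*y) z = -polar q (x*z) y := by
    intro x y z hx
    have := tits_q7 q hmulq x y z
    rw [hx, zero_mul, zero_sub] at this
    rw [this, polar_comm q y (x*z)]
  have hq6 : ∀ x y z : Q, polar q y 1 = 0 → polar q (x*y) z = -polar q (z*y) x := by
    intro x y z hy
    have := tits_q6 q hmulq x y z
    rw [hy, zero_mul, zero_sub] at this
    rw [this, polar_comm q x (z*y)]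
  -- abbreviate
  have e1 : polar q (b*a) c = -polar q (b*c) a := hq7 b a c hb
  have e2 : polar q (c*b) a = -polar q (a*b) c := hq6 c b a hb
  have e3 : polar q (c*a) b = polar q (a*b) c := by
    rw [hq7 c a b hc, e2, neg_neg]
  have e4 : polar q (a*c) b = -polar q (a*b) c := hq7 a c b ha
  have ebar : polar q (b*a) c = -polar q (a*b) c := by
    rw [hq6 b a c ha, e3]
  have ecyc : polar q (b*c) a = polar q (a*b) c := by
    rw [hq7 b c a hb, ebar, neg_neg]
  constructor
  · rw [polar_sub_left, polar_sub_left, ebar, ecyc, e2]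
  · rw [polar_sub_left, polar_sub_left, ebar, e3, e4]

end


section
variable {k : Type*} [Field k]
variable {H : Type*} [NonUnitalNonAssocRing H] [Module k H]
  [SMulCommClass k H H] [IsScalarTower k H H]

variable (k) in
/-- The inner derivation `d_{x,y} = [L_x, L_y]` of a Jordan algebra `H`. -/
def Dop (x y : H) : Module.End k H :=
  LinearMap.mulLeft k x ∘ₗ LinearMap.mulLeft k y
    - LinearMap.mulLeft k y ∘ₗ LinearMap.mulLeft k x

/-- For a Jordan algebra `H` and a quaternion algebra `Q` over a
field of characteristic ≠ 2, the bracket on `T(Q,H) = (Q⁰ ⊗ H) ⊕ Der(H)` given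
by the commutator on `Der(H)`, `[d, a⊗x] = a ⊗ d(x)` and
`[a⊗x, b⊗y] = [a,b] ⊗ xy − 2b(a,b) d_{x,y}` satisfies the Jacobi identity,
making `T(Q,H)` a Lie algebra.  Since the bracket is bilinear, the Jacobi
identity is stated on the spanning elements `a⊗x` (`a ∈ Q⁰`, `x ∈ H`) and
`d ∈ Der(H)`, with each iterated bracket expanded according to the definition;
the component in `Q ⊗ H` and the component in `End(H)` of each Jacobi sum both
vanish.  (The fact `d_{x,y} ∈ Der(H)`, needed for the bracket to close, is the
first conclusion.) -/
theorem TitsConstruction_Jacobi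
    {Q : Type*} [NonAssocRing Q] [Module k Q] [SMulCommClass k Q Q]
    [IsScalarTower k Q Q]
    (h2 : (2 : k) ≠ 0)
    -- Q is a quaternion algebra: a 4-dimensional unital composition algebra
    (q : QuadraticForm k Q) (hdim : Module.finrank k Q = 4)
    (hmulq : ∀ x y : Q, q (x * y) = q x * q y)
    (hnd : ∀ x : Q, (∀ y : Q, QuadraticMap.polar q x y = 0) → x = 0)
    -- H is a Jordan algebra
    (hHcomm : ∀ x y : H, x * y = y * x)
    (hHjordan : ∀ x y : H, ((x * y) * (x * x)) = x * (y * (x * x))) :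
    -- d_{x,y} is a derivation of H
    (∀ x y u v : H, Dop k x y (u * v) = Dop k x y u * v + u * Dop k x y v) ∧
    -- Jacobi identity: three elements of Der(H)
    (∀ d d' d'' : Module.End k H,
      ⁅⁅d, d'⁆, d''⁆ + ⁅⁅d', d''⁆, d⁆ + ⁅⁅d'', d⁆, d'⁆ = 0) ∧
    -- Jacobi identity: two derivations and one a⊗x
    (∀ d d' : Module.End k H,
      (∀ u v : H, d (u * v) = d u * v + u * d v) →
      (∀ u v : H, d' (u * v) = d' u * v + u * d' v) →
      ∀ (a : Q) (x : H), QuadraticMap.polar q a 1 = 0 →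
        (a ⊗ₜ[k] (⁅d, d'⁆ x) - a ⊗ₜ[k] (d (d' x)) + a ⊗ₜ[k] (d' (d x))
          = (0 : Q ⊗[k] H))) ∧
    -- Jacobi identity: one derivation and two tensors a⊗x, b⊗y
    (∀ d : Module.End k H, (∀ u v : H, d (u * v) = d u * v + u * d v) →
      ∀ (a b : Q) (x y : H),
        QuadraticMap.polar q a 1 = 0 → QuadraticMap.polar q b 1 = 0 →
        ((a * b - b * a) ⊗ₜ[k] (d x * y) - (a * b - b * a) ⊗ₜ[k] (d (x * y))
            - (b * a - a * b) ⊗ₜ[k] (d y * x) = (0 : Q ⊗[k] H)) ∧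
        (-((2 * QuadraticMap.polar q a b) • Dop k (d x) y)
            - (2 * QuadraticMap.polar q a b) •
                (Dop k x y ∘ₗ d - d ∘ₗ Dop k x y)
            + (2 * QuadraticMap.polar q b a) • Dop k (d y) x
          = (0 : Module.End k H))) ∧
    -- Jacobi identity: three tensors a⊗x, b⊗y, c⊗z
    (∀ (a b c : Q) (x y z : H),
      QuadraticMap.polar q a 1 = 0 → QuadraticMap.polar q b 1 = 0 →
      QuadraticMap.polar q c 1 = 0 →
      (((a * b - b * a) * c - c * (a * b - b * a)) ⊗ₜ[k] ((x * y) * z)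
          - (2 * QuadraticMap.polar q a b) • (c ⊗ₜ[k] (Dop k x y z))
        + ((b * c - c * b) * a - a * (b * c - c * b)) ⊗ₜ[k] ((y * z) * x)
          - (2 * QuadraticMap.polar q b c) • (a ⊗ₜ[k] (Dop k y z x))
        + ((c * a - a * c) * b - b * (c * a - a * c)) ⊗ₜ[k] ((z * x) * y)
          - (2 * QuadraticMap.polar q c a) • (b ⊗ₜ[k] (Dop k z x y))
        = (0 : Q ⊗[k] H)) ∧
      (-((2 * QuadraticMap.polar q (a * b - b * a) c) • Dop k (x * y) z)
          - (2 * QuadraticMap.polar q (b * c - c * b) a) • Dop k (y * z) x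
          - (2 * QuadraticMap.polar q (c * a - a * c) b) • Dop k (z * x) y
        = (0 : Module.End k H))) := by
  have hE := tits_lemE h2 hHcomm hHjordan
  have hDer := tits_lemDer hHcomm hE
  have hDop : ∀ x y h : H, Dop k x y h = x*(y*h) - y*(x*h) := by
    intro x y h
    simp [Dop, LinearMap.sub_apply, LinearMap.comp_apply, LinearMap.mulLeft_apply]
  refine ⟨?_, ?_, ?_, ?_, ?_⟩
  · intro x y u v
    rw [hDop, hDop, hDop]
    exact hDer x y u v
  · intro d d' d''
    simp only [Ring.lie_def]
    noncomm_ring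
  · intro d d' hd hd' a x ha
    have hbr : ⁅d, d'⁆ x = d (d' x) - d' (d x) := by
      simp [Ring.lie_def, LinearMap.sub_apply, Module.End.mul_apply]
    rw [hbr, TensorProduct.tmul_sub]
    abel
  · intro d hd a b x y ha hb
    constructor
    · rw [show b*a - a*b = -(a*b - b*a) from (neg_sub _ _).symm, TensorProduct.neg_tmul,
        hd x y, TensorProduct.tmul_add, hHcomm (d y) x]
      abel
    · rw [QuadraticMap.polar_comm q b a]
      ext w
      simp only [LinearMap.add_apply, LinearMap.sub_apply, LinearMap.neg_apply,
        LinearMap.smul_apply, LinearMap.comp_apply, LinearMap.zero_apply, hDop]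
      have e1 := hd x (y*w)
      have e2 := hd y (x*w)
      have e3 := hd y w
      have e4 := hd x w
      have key : -(d x * (y*w) - y * (d x * w))
          - ((x*(y*(d w)) - y*(x*(d w))) - d (x*(y*w) - y*(x*w)))
          + (d y * (x*w) - x * (d y * w)) = 0 := by
        rw [map_sub, e1, e2, e3, e4]
        simp only [mul_add]
        abel
      linear_combination (norm := module) (2 * QuadraticMap.polar q a b) • key
  · intro a b c x y z ha hb hc
    constructor
    · rw [tits_qdc q h2 hdim hmulq hnd ha hb hc, tits_qdc q h2 hdim hmulq hnd hb hc ha,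
        tits_qdc q h2 hdim hmulq hnd hc ha hb]
      simp only [hDop]
      rw [QuadraticMap.polar_comm q b a, QuadraticMap.polar_comm q c a,
        QuadraticMap.polar_comm q c b]
      have r1 : y*(x*z) = (z*x)*y := by rw [hHcomm x z, hHcomm y (z*x)]
      have r2 : z*(y*x) = (x*y)*z := by rw [hHcomm y x, hHcomm z (x*y)]
      have r3 : x*(z*y) = (y*z)*x := by rw [hHcomm z y, hHcomm x (y*z)]
      have r4 : x*(y*z) = (y*z)*x := hHcomm _ _
      have r5 : y*(z*x) = (z*x)*y := hHcomm _ _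
      have r6 : z*(x*y) = (x*y)*z := hHcomm _ _
      rw [r1, r2, r3, r4, r5, r6]
      simp only [TensorProduct.sub_tmul, TensorProduct.add_tmul, TensorProduct.smul_tmul',
        TensorProduct.tmul_sub, TensorProduct.tmul_add, smul_sub]
      module
    · obtain ⟨g1, g2⟩ := tits_qcyc q hmulq ha hb hc
      rw [← g1, ← g2]
      have hDsum : Dop k (x*y) z + Dop k (y*z) x + Dop k (z*x) y = 0 := by
        ext w
        simp only [LinearMap.add_apply, LinearMap.zero_apply, hDop]
        have := tits_lemC hHcomm hE x y z w
        linear_combination (norm := abel) this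
      linear_combination (norm := module)
        (-(2 * QuadraticMap.polar q (a*b - b*a) c)) • hDsum

end
end
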